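/- Fix n ≥ 1 and let θ(t) be the Riemann–Siegel theta function satisfying θ(t) = (t/2)·ln(t/(2π)) − t/2 − π/8 + O(1/t). Then for T ≥ 2, U ∈ (0, T^{1/2}], x ∈ [0, U], and P = T/(2π), the phase satisfies 2θ(T + x) − (T + x)·ln n = x·ln(P/n) + 2πP·ln(P/n) − 2πP − π/4 + O((1 + U + U³)/T), with an implied constant independent of n, T, U, x. -/

import Mathlib

/-!
Writing θ = thetaApprox + O(1/t), the phase minus its claimed expansion is exactly
(T + x)·ln((T + x)/T) − x + 2(θ − thetaApprox)(T + x). The elementary bounds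
1 − 1/y ≤ ln y ≤ y − 1 squeeze b·ln(b/a) − (b − a) between 0 and (b − a)²/a, so the first part is
at most x²/T ≤ U²/T, and U² ≤ U + U³.
-/

open Real

noncomputable def thetaApprox (t : ℝ) : ℝ := t / 2 * log (t / (2 * π)) - t / 2 - π / 8

theorem abs_mul_log_div_sub_sub_le {a b : ℝ} (ha : 0 < a) (hb : 0 < b) :
    |b * log (b / a) - (b - a)| ≤ (b - a) ^ 2 / a := by
  have hba : 0 < b / a := div_pos hb ha
  have hlower : b - a ≤ b * log (b / a) := by
    have h := mul_le_mul_of_nonneg_left (one_sub_inv_le_log_of_pos hba) hb.le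
    rwa [inv_div, mul_sub, mul_one, mul_div_cancel₀ a hb.ne'] at h
  have hupper : b * log (b / a) ≤ b * (b / a - 1) :=
    mul_le_mul_of_nonneg_left (log_le_sub_one_of_pos hba) hb.le
  have hsq : b * (b / a - 1) - (b - a) = (b - a) ^ 2 / a := by
    field_simp
  rw [abs_of_nonneg (sub_nonneg.mpr hlower)]
  linarith

theorem two_mul_thetaApprox_sub_phase_eq {T x : ℝ} {n : ℕ} (hT : T ≠ 0) (hTx : T + x ≠ 0)
    (hn : n ≠ 0) :
    2 * thetaApprox (T + x) - (T + x) * log n -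
        (x * log (T / (2 * π) / n) + 2 * π * (T / (2 * π)) * log (T / (2 * π) / n)
          - 2 * π * (T / (2 * π)) - π / 4)
      = (T + x) * log ((T + x) / T) - x := by
  have h2π : 2 * π ≠ 0 := by positivity
  rw [thetaApprox, log_div hTx h2π, log_div (div_ne_zero hT h2π) (Nat.cast_ne_zero.mpr hn),
    log_div hT h2π, log_div hTx hT, mul_div_cancel₀ T h2π]
  ring

theorem phase_expansion (θ : ℝ → ℝ) (C₀ : ℝ)
    (hθ : ∀ t ≥ (2:ℝ),
      |θ t - ((t / 2) * Real.log (t / (2 * π)) - t / 2 - π / 8)| ≤ C₀ / t) :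
    ∃ C > (0:ℝ), ∀ n : ℕ, 1 ≤ n → ∀ T ≥ (2:ℝ), ∀ U : ℝ, 0 < U → U ≤ T ^ ((1:ℝ)/2) →
      ∀ x ∈ Set.Icc (0:ℝ) U,
        |2 * θ (T + x) - (T + x) * Real.log n -
          (x * Real.log (T / (2 * π) / n) + 2 * π * (T / (2 * π)) * Real.log (T / (2 * π) / n)
            - 2 * π * (T / (2 * π)) - π / 4)|
          ≤ C * (1 + U + U ^ 3) / T := by
  have hC₀ : 0 ≤ C₀ := by
    have h := (abs_nonneg _).trans (hθ 2 le_rfl)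
    linarith
  refine ⟨2 * C₀ + 1, by linarith, fun n hn T hT U hU _ x ⟨hx0, hxU⟩ => ?_⟩
  have hTpos : 0 < T := by linarith
  have hTx : 0 < T + x := by linarith
  set e := θ (T + x) - thetaApprox (T + x)
  have he : |e| ≤ C₀ / T :=
    (hθ (T + x) (by linarith)).trans (div_le_div_of_nonneg_left hC₀ hTpos (by linarith))
  have hmain := abs_mul_log_div_sub_sub_le hTpos hTx
  rw [add_sub_cancel_left] at hmain
  have hx2 : x ^ 2 / T ≤ U ^ 2 / T := by gcongr
  have hU2 : U ^ 2 ≤ U + U ^ 3 := by nlinarith [mul_nonneg hU.le (sq_nonneg (U - 1))]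
  have hphase : 2 * θ (T + x) - (T + x) * log n -
      (x * log (T / (2 * π) / n) + 2 * π * (T / (2 * π)) * log (T / (2 * π) / n)
        - 2 * π * (T / (2 * π)) - π / 4)
      = ((T + x) * log ((T + x) / T) - x) + 2 * e := by
    have h := two_mul_thetaApprox_sub_phase_eq hTpos.ne' hTx.ne' (Nat.one_le_iff_ne_zero.mp hn)
    linear_combination h
  calc _ = |((T + x) * log ((T + x) / T) - x) + 2 * e| := by rw [hphase]
    _ ≤ |(T + x) * log ((T + x) / T) - x| + 2 * |e| :=
        (abs_add_le _ _).trans_eq (by rw [abs_mul, abs_two])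
    _ ≤ U ^ 2 / T + 2 * (C₀ / T) := by linarith
    _ ≤ (2 * C₀ + 1) * (1 + U + U ^ 3) / T := by
        rw [← mul_div_assoc, ← add_div]
        gcongr
        nlinarith [mul_nonneg hC₀ (by positivity : (0:ℝ) ≤ U + U ^ 3)]
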